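/- Let K be a sick compactum and let (x_n)_{n∈ℕ} be a sequence of distinct isolated points of K. Then the set {(f(x_n))_{n∈ℕ} : f ∈ C(K,ℝ)} is an analytic subset of ℝ^ℕ with the product topology. -/

import Mathlib

open MeasureTheory Topology Filter Set

/-- A compact Hausdorff space `K` is *sick* if there are a separable Banach lattice `E`,
a positive `u : E`, and an injective linear lattice homomorphism `T : C(K, ℝ) → E` with
`T 1 = u` whose range is the principal ideal generated by `u`. -/
def IsSick (K : Type*) [TopologicalSpace K] : Prop :=
  ∃ (E : Type) (_ : NormedAddCommGroup E) (_ : Lattice E) (_ : IsOrderedAddMonoid E)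
    (_ : HasSolidNorm E) (_ : NormedSpace ℝ E) (_ : PosSMulStrictMono ℝ E)
    (_ : CompleteSpace E) (_ : TopologicalSpace.SeparableSpace E)
    (u : E) (T : C(K, ℝ) →ₗ[ℝ] E),
    0 ≤ u ∧ Function.Injective T ∧
      (∀ f g : C(K, ℝ), T (f ⊔ g) = T f ⊔ T g) ∧
      T 1 = u ∧
      Set.range T = {y : E | ∃ r : ℝ, 0 < r ∧ |y| ≤ r • u}

lemma aux_smul_sup_zero {E : Type} [NormedAddCommGroup E] [Lattice E] [IsOrderedAddMonoid E]
    [HasSolidNorm E] [NormedSpace ℝ E] [PosSMulStrictMono ℝ E] {e : E} (he : 0 ≤ e) (c : ℝ) : (c • e) ⊔ 0 = (max c 0) • e := by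
  rcases le_total 0 c with h | h
  · rw [sup_eq_left.mpr (smul_nonneg h he), max_eq_left h]
  · rw [max_eq_right h, zero_smul, sup_eq_right]
    have h2 : (0:E) ≤ (-c) • e := smul_nonneg (by linarith) he
    rw [neg_smul] at h2
    exact neg_nonneg.mp h2

lemma aux_extract_scalar {E : Type} [NormedAddCommGroup E] [Lattice E] [IsOrderedAddMonoid E]
    [HasSolidNorm E] [NormedSpace ℝ E] [PosSMulStrictMono ℝ E] {e : E} (he : 0 ≤ e) (hne : ‖e‖ ≠ 0) (c : ℝ) :
    (‖(c • e) ⊔ 0‖ - ‖(-(c • e)) ⊔ 0‖) / ‖e‖ = c := by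
  rw [aux_smul_sup_zero he, ← neg_smul, aux_smul_sup_zero he, norm_smul, norm_smul,
    Real.norm_of_nonneg (le_max_right _ _), Real.norm_of_nonneg (le_max_right _ _),
    ← sub_mul, mul_div_assoc, div_self hne, mul_one, max_zero_sub_max_neg_zero_eq_self]

/-- For a sick compactum `K` and a sequence of distinct isolated points `x n` of `K`, the set of
sequences of values at the `x n` of continuous functions is an analytic subset of `ℝ^ℕ`. -/
theorem stmt_4 (K : Type) [TopologicalSpace K] [CompactSpace K] [T2Space K]
    (hK : IsSick K) (x : ℕ → K) (hinj : Function.Injective x)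
    (hiso : ∀ n, IsOpen ({x n} : Set K)) :
    MeasureTheory.AnalyticSet {t : ℕ → ℝ | ∃ f : C(K, ℝ), ∀ n, f (x n) = t n} := by
  obtain ⟨E, _, _, _, _, _, _, _, _, u, T, hu, hinjT, hsup, hT1, hrange⟩ := hK
  -- basic order facts about T
  have hinf : ∀ f g : C(K, ℝ), T (f ⊓ g) = T f ⊓ T g := by
    intro f g
    have h1 : f ⊓ g = -((-f) ⊔ (-g)) := by rw [neg_sup, neg_neg, neg_neg]
    rw [h1, map_neg, hsup, map_neg, map_neg, neg_sup, neg_neg, neg_neg]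
  have hmono : ∀ f g : C(K, ℝ), f ≤ g → T f ≤ T g := by
    intro f g h
    have h2 := hsup f g
    rw [sup_eq_right.mpr h] at h2
    exact h2 ▸ le_sup_left
  have horder : ∀ f g : C(K, ℝ), T f ≤ T g → f ≤ g := by
    intro f g h
    have h2 : T (f ⊔ g) = T g := by rw [hsup, sup_eq_right.mpr h]
    exact sup_eq_right.mp (hinjT h2)
  have habs : ∀ f : C(K, ℝ), T |f| = |T f| := by
    intro f
    rw [show |f| = f ⊔ (-f) from rfl, hsup, map_neg]
    rfl
  -- indicator functions of the isolated points
  have hclopen : ∀ n, IsClopen ({x n} : Set K) := fun n => ⟨isClosed_singleton, hiso n⟩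
  let χ : ℕ → C(K, ℝ) := fun n =>
    ⟨Set.indicator {x n} 1, continuous_indicator
      (by intro a ha; rw [(hclopen n).frontier_eq] at ha; exact absurd ha (notMem_empty a))
      continuous_const.continuousOn⟩
  have hχ_self : ∀ n, χ n (x n) = 1 := by
    intro n
    simp [χ, Set.indicator_of_mem (mem_singleton (x n))]
  have hχ_ne : ∀ n y, y ≠ x n → χ n y = 0 := by
    intro n y hy
    simp only [χ, ContinuousMap.coe_mk]
    exact Set.indicator_of_notMem (by simpa using hy) _
  have hχnonneg : ∀ n, (0 : C(K, ℝ)) ≤ χ n := by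
    intro n
    rw [ContinuousMap.le_def]
    intro a
    by_cases ha : a = x n
    · subst ha; rw [hχ_self]; norm_num
    · rw [hχ_ne n a ha]; rfl
  set e : ℕ → E := fun n => T (χ n) with he_def
  have he0 : ∀ n, 0 ≤ e n := by
    intro n
    have := hmono 0 (χ n) (hχnonneg n)
    rwa [map_zero] at this
  have hene : ∀ n, ‖e n‖ ≠ 0 := by
    intro n
    rw [norm_ne_zero_iff]
    intro h
    have : χ n = 0 := hinjT (by rw [map_zero]; exact h)
    have h1 := hχ_self n
    rw [this] at h1
    simp at h1
  -- the key lattice identity in C(K, ℝ)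
  have key : ∀ (r : ℝ) (f : C(K, ℝ)) (n : ℕ), |f (x n)| ≤ r →
      (f ⊓ r • χ n) ⊔ (-r) • χ n = f (x n) • χ n := by
    intro r f n hb
    ext y
    simp only [ContinuousMap.sup_apply, ContinuousMap.inf_apply, ContinuousMap.smul_apply,
      smul_eq_mul]
    by_cases hy : y = x n
    · subst hy
      rw [hχ_self, mul_one, mul_one, mul_one]
      rcases abs_le.mp hb with ⟨h1, h2⟩
      rw [min_eq_left h2, max_eq_left h1]
    · rw [hχ_ne n y hy, mul_zero, mul_zero, mul_zero]
      exact sup_eq_right.mpr inf_le_right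
  have keyT : ∀ (r : ℝ) (f : C(K, ℝ)) (n : ℕ), |f (x n)| ≤ r →
      (T f ⊓ r • e n) ⊔ (-r) • e n = f (x n) • e n := by
    intro r f n hb
    have h := congrArg T (key r f n hb)
    rwa [hsup, hinf, T.map_smul, T.map_smul, T.map_smul] at h
  -- the extraction map
  set Ψ : ℝ → E → ℕ → ℝ := fun r y n =>
    (‖((y ⊓ r • e n) ⊔ (-r) • e n) ⊔ 0‖ - ‖(-((y ⊓ r • e n) ⊔ (-r) • e n)) ⊔ 0‖) / ‖e n‖
    with hΨ_def
  have hΨval : ∀ (r : ℝ) (f : C(K, ℝ)) (n : ℕ), |f (x n)| ≤ r → Ψ r (T f) n = f (x n) := by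
    intro r f n hb
    rw [hΨ_def]
    simp only
    rw [keyT r f n hb]
    exact aux_extract_scalar (he0 n) (hene n) _
  have hΨcont : ∀ r : ℝ, Continuous (Ψ r) := by
    intro r
    rw [hΨ_def]
    apply continuous_pi
    intro n
    apply Continuous.div_const
    apply Continuous.sub
    · exact (((continuous_id.inf continuous_const).sup continuous_const).sup
        continuous_const).norm
    · exact ((((continuous_id.inf continuous_const).sup continuous_const).neg).sup
        continuous_const).norm
  -- rewriting the set as a countable union of images of closed sets
  have hset : {t : ℕ → ℝ | ∃ f : C(K, ℝ), ∀ n, f (x n) = t n}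
      = ⋃ m : ℕ, Ψ ((m : ℝ) + 1) '' {y : E | |y| ≤ ((m : ℝ) + 1) • u} := by
    ext t
    simp only [mem_setOf_eq, mem_iUnion, mem_image]
    constructor
    · rintro ⟨f, hf⟩
      obtain ⟨m, hm⟩ := exists_nat_ge ‖f‖
      have hbound : ∀ n, |f (x n)| ≤ (m : ℝ) + 1 := by
        intro n
        calc |f (x n)| ≤ ‖f‖ := f.norm_coe_le_norm (x n)
          _ ≤ (m : ℝ) := hm
          _ ≤ (m : ℝ) + 1 := by linarith
      refine ⟨m, T f, ?_, ?_⟩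
      · show |T f| ≤ ((m : ℝ) + 1) • u
        rw [← habs]
        have h1 : |f| ≤ ((m : ℝ) + 1) • 1 := by
          rw [ContinuousMap.le_def]
          intro a
          have : |f| a = |f a| := rfl
          rw [this]
          have h2 : (((m : ℝ) + 1) • (1 : C(K, ℝ))) a = (m : ℝ) + 1 := by
            simp
          rw [h2]
          calc |f a| ≤ ‖f‖ := f.norm_coe_le_norm a
            _ ≤ (m : ℝ) := hm
            _ ≤ (m : ℝ) + 1 := by linarith
        have h3 := hmono _ _ h1
        rwa [T.map_smul, hT1] at h3
      · funext n
        rw [hΨval ((m : ℝ) + 1) f n (hbound n), hf n]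
    · rintro ⟨m, y, hy, rfl⟩
      have hyr : y ∈ Set.range T := by
        rw [hrange]
        exact ⟨(m : ℝ) + 1, by positivity, hy⟩
      obtain ⟨f, rfl⟩ := hyr
      have hbound : ∀ n, |f (x n)| ≤ (m : ℝ) + 1 := by
        intro n
        have h2 : T |f| ≤ T (((m : ℝ) + 1) • 1) := by
          rw [habs, T.map_smul, hT1]
          exact hy
        have h3 := horder _ _ h2
        have h4 := ContinuousMap.le_def.mp h3 (x n)
        have h5 : |f| (x n) = |f (x n)| := rfl
        have h6 : (((m : ℝ) + 1) • (1 : C(K, ℝ))) (x n) = (m : ℝ) + 1 := by simp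
        rwa [h5, h6] at h4
      exact ⟨f, fun n => (hΨval ((m : ℝ) + 1) f n (hbound n)).symm⟩
  rw [hset]
  apply AnalyticSet.iUnion
  intro m
  have hclosed : IsClosed {y : E | |y| ≤ ((m : ℝ) + 1) • u} := by
    have habs_cont : Continuous (fun y : E => |y|) := continuous_id.sup continuous_neg
    exact isClosed_le habs_cont continuous_const
  exact (hclosed.analyticSet).image_of_continuous (hΨcont _)
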